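/- arXiv:cs/0505037 — 2 statements merged into one kernel-verified Lean document; each statement's English description precedes it below -/
import Mathlib

section
/- If x diverges and x ≈ y, then y diverges. -/
inductive Converges {A : Type*} : Computation A → A → Prop
  | ret (a : A) : Converges (Computation.pure a) a
  | step {x : Computation A} {a : A} : Converges x a → Converges x.think a

def Diverge {A : Type*} (x : Computation A) : Prop :=
  ∃ P : Computation A → Prop, P x ∧ ∀ y, P y → ∃ y', y = Computation.think y' ∧ P y'

def WBisim {A : Type*} (x y : Computation A) : Prop :=
  ∃ R : Computation A → Computation A → Prop, R x y ∧ ∀ u v, R u v →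
    (∃ a, Converges u a ∧ Converges v a) ∨
    (∃ u' v', u = Computation.think u' ∧ v = Computation.think v' ∧ R u' v')

def ConvOrder {A : Type*} (x y : Computation A) : Prop :=
  ∃ R : Computation A → Computation A → Prop, R x y ∧ ∀ u v, R u v →
    (∃ a, Converges u a ∧ Converges v a) ∨
    (∃ u' v', u = Computation.think u' ∧ v = Computation.think v' ∧ R u' v') ∨
    (∃ u', u = Computation.think u' ∧ R u' v)

def stepInf (A : Type*) : Computation A := Computation.empty A

inductive DFinite {A : Type*} : Computation A → Prop
  | ret (a : A) : DFinite (Computation.pure a)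
  | step {x : Computation A} : DFinite x → DFinite x.think

def Finitary {A B : Type*} (F : (A → Computation B) → (A → Computation B)) : Prop :=
  ∀ f a b, Converges (F f a) b →
    ∃ l : List (A × B), (∀ p ∈ l, Converges (f p.1) p.2) ∧
      ∀ g : A → Computation B, (∀ p ∈ l, Converges (g p.1) p.2) → Converges (F g a) b

private lemma think_inj' {A : Type*} {a b : Computation A}
    (h : Computation.think a = Computation.think b) : a = b := by
  have := congrArg Computation.destruct h
  simpa [Computation.destruct_think] using this

private lemma pure_ne_think' {A : Type*} (a : A) (b : Computation A) :
    Computation.pure a ≠ Computation.think b := by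
  intro h
  have := congrArg Computation.destruct h
  simp [Computation.destruct_think] at this

private lemma diverge_not_converges {A : Type*} {x : Computation A} {a : A}
    (hc : Converges x a) (hd : Diverge x) : False := by
  induction hc with
  | ret a =>
    obtain ⟨P, hP, hstep⟩ := hd
    obtain ⟨y', hy, _⟩ := hstep _ hP
    exact pure_ne_think' _ _ hy
  | step hc ih =>
    apply ih
    obtain ⟨P, hP, hstep⟩ := hd
    obtain ⟨y', hy, hPy⟩ := hstep _ hP
    exact ⟨P, (think_inj' hy) ▸ hPy, hstep⟩

theorem stmt5 {A : Type*} (x y : Computation A) :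
    Diverge x → WBisim x y → Diverge y := by
  rintro hd ⟨R, hR, hstep⟩
  refine ⟨fun y => ∃ x, Diverge x ∧ R x y, ⟨x, hd, hR⟩, ?_⟩
  rintro v ⟨u, hdu, huv⟩
  rcases hstep _ _ huv with ⟨a, hu, _⟩ | ⟨u', v', hu, hv, hR'⟩
  · exact absurd hdu (fun h => diverge_not_converges hu h)
  · refine ⟨v', hv, u', ?_, hR'⟩
    obtain ⟨P, hP, hs⟩ := hdu
    obtain ⟨u'', hu'', hPu⟩ := hs _ hP
    exact ⟨P, (think_inj' (hu ▸ hu'')) ▸ hPu, hs⟩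
end

section
/- Let F be a finitary operator on A → B^ν. Define Y(F) a as the parallel search over the chain (k_n a), where k₀ = λa.step^∞ and k_{n+1} = F k_n. Then Y(F) is a fixed point of F up to pointwise weak bisimilarity (F Y(F) ≈ Y(F) pointwise), and it is the least prefixed point: if F f ⊑ f pointwise then Y(F) ⊑ f pointwise. -/
open Filter

section Convergence

variable {A : Type*}

theorem Computation.pure_ne_think (a : A) (x : Computation A) : pure a ≠ think x :=
  fun h => by simpa using congrArg destruct h

theorem Computation.think_injective : Function.Injective (think : Computation A → Computation A) :=
  fun x y h => by simpa using congrArg destruct h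

theorem converges_iff_mem {x : Computation A} {a : A} : Converges x a ↔ a ∈ x := by
  refine ⟨fun h => ?_, fun h =>
    Computation.memRecOn (C := (Converges · a)) h (.ret a) fun _ => .step⟩
  induction h with
  | ret a => exact Computation.ret_mem a
  | step _ ih => exact Computation.think_mem ih

theorem converges_think_iff {x : Computation A} {a : A} : Converges x.think a ↔ Converges x a := by
  simp only [converges_iff_mem]
  exact ⟨Computation.of_think_mem, Computation.think_mem⟩

theorem not_converges_empty (a : A) : ¬Converges (Computation.empty A) a :=
  fun h => Computation.notMem_empty a (converges_iff_mem.1 h)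

theorem convOrder_iff {x y : Computation A} :
    ConvOrder x y ↔ ∀ b, Converges x b → Converges y b := by
  constructor
  · rintro ⟨R, hxy, hR⟩ b hb
    induction hb generalizing y with
    | ret a =>
      rcases hR _ _ hxy with ⟨c, hc, hyc⟩ | ⟨u', -, hu, -⟩ | ⟨u', hu, -⟩
      · rwa [Computation.mem_unique (Computation.ret_mem a) (converges_iff_mem.1 hc)]
      all_goals exact absurd hu (Computation.pure_ne_think _ _)
    | @step x' a hx' ih =>
      rcases hR _ _ hxy with ⟨c, hc, hyc⟩ | ⟨u', v', hu, rfl, hR'⟩ | ⟨u', hu, hR'⟩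
      · rwa [Computation.mem_unique (converges_iff_mem.1 hx'.step) (converges_iff_mem.1 hc)]
      · exact (ih (Computation.think_injective hu ▸ hR')).step
      · exact ih (Computation.think_injective hu ▸ hR')
  · intro h
    refine ⟨fun u v => ∀ b, Converges u b → Converges v b, h, fun u v huv => ?_⟩
    cases u using Computation.recOn with
    | pure a => exact .inl ⟨a, .ret a, huv a (.ret a)⟩
    | think u' => exact .inr (.inr ⟨u', rfl, fun b hb => huv b hb.step⟩)

theorem wBisim_of_forall_converges_iff {x y : Computation A}
    (h : ∀ b, Converges x b ↔ Converges y b) : WBisim x y := by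
  refine ⟨fun u v => ∀ b, Converges u b ↔ Converges v b, h, fun u v huv => ?_⟩
  cases u using Computation.recOn with
  | pure a => exact .inl ⟨a, .ret a, (huv a).1 (.ret a)⟩
  | think u' =>
    cases v using Computation.recOn with
    | pure a => exact .inl ⟨a, (huv a).2 (.ret a), .ret a⟩
    | think v' =>
      exact .inr ⟨u', v', rfl, rfl, by simpa only [converges_think_iff] using huv⟩

end Convergence

section Kleene

variable {A B : Type*} {F : (A → Computation B) → (A → Computation B)}

def kleeneApprox (F : (A → Computation B) → (A → Computation B)) (n : ℕ) : A → Computation B :=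
  F^[n] fun _ => stepInf B

theorem kleeneApprox_succ (F : (A → Computation B) → (A → Computation B)) (n : ℕ) :
    kleeneApprox F (n + 1) = F (kleeneApprox F n) :=
  Function.iterate_succ_apply' F n _

theorem not_converges_kleeneApprox_zero (F : (A → Computation B) → (A → Computation B))
    (a : A) (b : B) : ¬Converges (kleeneApprox F 0 a) b :=
  not_converges_empty b

theorem eq_kleeneApprox {k : ℕ → A → Computation B} (hk0 : k 0 = fun _ => stepInf B)
    (hks : ∀ n, k (n + 1) = F (k n)) : k = kleeneApprox F := by
  funext n
  induction n with
  | zero => exact hk0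
  | succ n ih => rw [hks, ih, kleeneApprox_succ]

theorem Finitary.converges_mono (hF : Finitary F) {f g : A → Computation B}
    (hfg : ∀ a b, Converges (f a) b → Converges (g a) b) {a : A} {b : B}
    (h : Converges (F f a) b) : Converges (F g a) b := by
  obtain ⟨l, hl, hFl⟩ := hF f a b h
  exact hFl g fun p hp => hfg _ _ (hl p hp)

theorem Finitary.kleeneApprox_succ_mono (hF : Finitary F) :
    ∀ n a b, Converges (kleeneApprox F n a) b → Converges (kleeneApprox F (n + 1) a) b
  | 0, a, b, h => absurd h (not_converges_kleeneApprox_zero F a b)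
  | n + 1, a, b, h => by
    rw [kleeneApprox_succ] at h ⊢
    exact hF.converges_mono (hF.kleeneApprox_succ_mono n) h

theorem Finitary.kleeneApprox_mono (hF : Finitary F) {n m : ℕ} (hnm : n ≤ m) {a : A} {b : B}
    (h : Converges (kleeneApprox F n a) b) : Converges (kleeneApprox F m a) b := by
  induction hnm with
  | refl => exact h
  | step _ ih => exact hF.kleeneApprox_succ_mono _ _ _ ih

theorem Finitary.exists_kleeneApprox_of_converges (hF : Finitary F) {g : A → Computation B}
    (hg : ∀ a b, Converges (g a) b → ∃ n, Converges (kleeneApprox F n a) b) {a : A} {b : B}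
    (h : Converges (F g a) b) : ∃ n, Converges (kleeneApprox F n a) b := by
  obtain ⟨l, hl, hFl⟩ := hF g a b h
  have hstage : ∀ p ∈ l, ∀ᶠ n in atTop, Converges (kleeneApprox F n p.1) p.2 := fun p hp =>
    let ⟨n, hn⟩ := hg _ _ (hl p hp)
    eventually_atTop.2 ⟨n, fun _ hm => hF.kleeneApprox_mono hm hn⟩
  obtain ⟨N, hN⟩ := ((eventually_all_finite l.finite_toSet).2 hstage).exists
  exact ⟨N + 1, by rw [kleeneApprox_succ]; exact hFl _ hN⟩

theorem Finitary.converges_of_kleeneApprox (hF : Finitary F) {g : A → Computation B}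
    (hg : ∀ n a b, Converges (kleeneApprox F n a) b → Converges (g a) b) {n : ℕ} {a : A} {b : B}
    (h : Converges (kleeneApprox F n a) b) : Converges (F g a) b := by
  cases n with
  | zero => exact absurd h (not_converges_kleeneApprox_zero F a b)
  | succ m =>
    rw [kleeneApprox_succ] at h
    exact hF.converges_mono (hg m) h

theorem Finitary.kleeneApprox_le_of_prefixed (hF : Finitary F) {f : A → Computation B}
    (hf : ∀ a b, Converges (F f a) b → Converges (f a) b) :
    ∀ n a b, Converges (kleeneApprox F n a) b → Converges (f a) b
  | 0, a, b, h => absurd h (not_converges_kleeneApprox_zero F a b)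
  | n + 1, a, b, h => by
    rw [kleeneApprox_succ] at h
    exact hf a b (hF.converges_mono (hF.kleeneApprox_le_of_prefixed hf n) h)

end Kleene

theorem stmt19_general {A B : Type*} (F : (A → Computation B) → (A → Computation B))
    (hF : Finitary F) (k : ℕ → A → Computation B)
    (hk0 : k 0 = fun _ => stepInf B)
    (hks : ∀ n : ℕ, k (n + 1) = F (k n))
    (psearch : (ℕ → Computation B) → Computation B)
    (hp1 : ∀ (f : ℕ → Computation B) (b : B), Converges (psearch f) b → ∃ n, Converges (f n) b)
    (hp2 : ∀ f : ℕ → Computation B, (∀ n m, n ≤ m → ConvOrder (f n) (f m)) →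
      ∀ (n : ℕ) (b : B), Converges (f n) b → Converges (psearch f) b)
    (Y : A → Computation B) (hY : Y = fun a => psearch (fun n => k n a)) :
    (∀ a : A, WBisim (F Y a) (Y a)) ∧
    (∀ f : A → Computation B, (∀ a, ConvOrder (F f a) (f a)) → ∀ a, ConvOrder (Y a) (f a)) := by
  subst hY
  obtain rfl := eq_kleeneApprox hk0 hks
  have hY : ∀ a b, Converges (psearch fun n => kleeneApprox F n a) b ↔
      ∃ n, Converges (kleeneApprox F n a) b := fun a b =>
    ⟨hp1 _ b, fun ⟨n, hn⟩ =>
      hp2 _ (fun _ _ hnm => convOrder_iff.2 fun _ => hF.kleeneApprox_mono hnm) n b hn⟩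
  refine ⟨fun a => wBisim_of_forall_converges_iff fun b => ?_,
    fun f hf a => convOrder_iff.2 fun b hb => ?_⟩
  · rw [hY]
    exact ⟨hF.exists_kleeneApprox_of_converges fun a b => (hY a b).1,
      fun ⟨n, hn⟩ => hF.converges_of_kleeneApprox (fun n a b h => (hY a b).2 ⟨n, h⟩) hn⟩
  · obtain ⟨n, hn⟩ := hp1 _ b hb
    exact hF.kleeneApprox_le_of_prefixed (fun a => convOrder_iff.1 (hf a)) n a b hn

theorem stmt19 {A B : Type*} (F : (A → Computation B) → (A → Computation B))
    (hF : Finitary F) (k : ℕ → A → Computation B)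
    (hk0 : k 0 = fun _ => stepInf B)
    (hks : ∀ n : ℕ, k (n + 1) = F (k n))
    (psearch : (ℕ → Computation B) → Computation B)
    (hp1 : ∀ (f : ℕ → Computation B) (b : B), Converges (psearch f) b → ∃ n, Converges (f n) b)
    (hp2 : ∀ f : ℕ → Computation B, (∀ n m, n ≤ m → ConvOrder (f n) (f m)) →
      ∀ (n : ℕ) (b : B), Converges (f n) b → Converges (psearch f) b)
    (hp3 : ∀ (f : ℕ → Computation B) (y : Computation B),
      (∀ n, ConvOrder (f n) y) → ConvOrder (psearch f) y)
    (Y : A → Computation B) (hY : Y = fun a => psearch (fun n => k n a)) :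
    (∀ a : A, WBisim (F Y a) (Y a)) ∧
    (∀ f : A → Computation B, (∀ a, ConvOrder (F f a) (f a)) → ∀ a, ConvOrder (Y a) (f a)) :=
  stmt19_general F hF k hk0 hks psearch hp1 hp2 Y hY
end
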